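/- arXiv:1310.5244 — 2 statements merged into one kernel-verified Lean document; each statement's English description precedes it below -/
import Mathlib

section
/- Let P be a finite set of points and H a finite collection of sets in R^n. Fix γ > 4 and assume that for each pair of distinct sets H, H' ∈ H, the number of H'' ∈ H with |H ∩ H' ∩ H'' ∩ P| ≥ γ is at most γ. Then I(P,H) ≤ 4γ(|P| + |H|·|P|^{2/3}). -/
/-! Write `d p` for the number of sets of `H` through `p`. For distinct `h, h'` through `p`, all
but at most `γ` of the `d p` sets `h''` through `p` are *light*, i.e. `|h ∩ h' ∩ h'' ∩ P| < γ`, so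
`p` lies on at least `d (d - 1) (d - γ)` light triples. A light triple contains fewer than `γ`
points, so summing over `p` gives `∑ₚ d (d - 1) (d - γ) ≤ γ |H|³`. On the points with `d ≥ 2γ`
this yields `∑ d³ ≤ 4γ |H|³`, and Hölder bounds their incidences by `(4γ)^{1/3} |H| |P|^{2/3}`;
the other points have fewer than `2γ` incidences each. -/

open scoped Classical

open Finset

noncomputable section TripleIntersections

variable {α : Type*} (P : Finset α) (H : Finset (Set α))

def setsThrough (p : α) : Finset (Set α) := H.filter (p ∈ ·)

def tripleCount (h h' h'' : Set α) : ℕ := #(P.filter (fun p => p ∈ h ∧ p ∈ h' ∧ p ∈ h''))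

def lightThirds (γ : ℝ) (h h' : Set α) : Finset (Set α) :=
  H.filter (fun h'' => (tripleCount P h h' h'' : ℝ) < γ)

/-- The number of triples `(h, h', h'')` of sets through `p` with `h ≠ h'` and
`|h ∩ h' ∩ h'' ∩ P| < γ`. -/
def lightTripleCount (γ : ℝ) (p : α) : ℕ :=
  ∑ q ∈ (setsThrough H p).offDiag, #((lightThirds P H γ q.1 q.2).filter (p ∈ ·))

lemma sum_card_filter_mem_eq_sum_card_setsThrough :
    ∑ h ∈ H, #(P.filter (fun p => p ∈ h)) = ∑ p ∈ P, #(setsThrough H p) :=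
  (sum_card_bipartiteAbove_eq_sum_card_bipartiteBelow (fun p h => p ∈ h)).symm

variable {P H}

lemma card_setsThrough_sub_le_card_lightThirds {γ : ℝ} {p : α} {h h' : Set α}
    (hheavy : ((H.filter (fun h'' => γ ≤ (tripleCount P h h' h'' : ℝ))).card : ℝ) ≤ γ) :
    (#(setsThrough H p) : ℝ) - γ ≤ #((lightThirds P H γ h h').filter (p ∈ ·)) := by
  have hsub : setsThrough H p ⊆ (lightThirds P H γ h h').filter (p ∈ ·) ∪
      H.filter (fun h'' => γ ≤ (tripleCount P h h' h'' : ℝ)) := by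
    intro h'' hh''
    simp only [setsThrough, lightThirds, mem_union, mem_filter] at hh'' ⊢
    by_cases hlt : (tripleCount P h h' h'' : ℝ) < γ
    · exact Or.inl ⟨⟨hh''.1, hlt⟩, hh''.2⟩
    · exact Or.inr ⟨hh''.1, not_lt.mp hlt⟩
  have hcard : (#(setsThrough H p) : ℝ) ≤ #((lightThirds P H γ h h').filter (p ∈ ·)) +
      #(H.filter (fun h'' => γ ≤ (tripleCount P h h' h'' : ℝ))) := by
    exact_mod_cast (card_le_card hsub).trans (card_union_le _ _)
  linarith

lemma le_lightTripleCount {γ : ℝ} (p : α)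
    (hint : ∀ h ∈ H, ∀ h' ∈ H, h ≠ h' →
      ((H.filter (fun h'' => γ ≤ (tripleCount P h h' h'' : ℝ))).card : ℝ) ≤ γ) :
    (#(setsThrough H p) : ℝ) * (#(setsThrough H p) - 1) * (#(setsThrough H p) - γ) ≤
      lightTripleCount P H γ p := by
  set d : ℝ := (#(setsThrough H p) : ℝ)
  have hpair : ∀ q ∈ (setsThrough H p).offDiag,
      d - γ ≤ #((lightThirds P H γ q.1 q.2).filter (p ∈ ·)) := by
    intro q hq
    obtain ⟨hq1, hq2, hne⟩ := mem_offDiag.mp hq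
    exact card_setsThrough_sub_le_card_lightThirds
      (hint _ (mem_filter.mp hq1).1 _ (mem_filter.mp hq2).1 hne)
  have hcard : (#(setsThrough H p).offDiag : ℝ) = d * (d - 1) := by
    rw [offDiag_card, Nat.cast_sub (Nat.le_mul_self _)]
    push_cast
    ring
  calc d * (d - 1) * (d - γ) = #(setsThrough H p).offDiag • (d - γ) := by
        rw [nsmul_eq_mul, hcard]
    _ ≤ ∑ q ∈ (setsThrough H p).offDiag, (#((lightThirds P H γ q.1 q.2).filter (p ∈ ·)) : ℝ) :=
        card_nsmul_le_sum _ _ _ hpair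
    _ = lightTripleCount P H γ p := by
        rw [lightTripleCount]
        push_cast
        rfl

lemma sum_card_lightThirds_filter (γ : ℝ) (h h' : Set α) :
    ∑ p ∈ P.filter (fun p => p ∈ h ∧ p ∈ h'), #((lightThirds P H γ h h').filter (p ∈ ·)) =
      ∑ h'' ∈ lightThirds P H γ h h', tripleCount P h h' h'' := by
  refine (sum_card_bipartiteAbove_eq_sum_card_bipartiteBelow (fun p h'' => p ∈ h'')).trans
    (sum_congr rfl fun h'' _ => ?_)
  simp only [bipartiteBelow, filter_filter, and_assoc, tripleCount]

lemma sum_lightTripleCount_le {γ : ℝ} (hγ : 0 ≤ γ) :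
    (∑ p ∈ P, lightTripleCount P H γ p : ℝ) ≤ γ * #H ^ 3 := by
  have hswap : ∑ p ∈ P, lightTripleCount P H γ p =
      ∑ q ∈ H.offDiag, ∑ h'' ∈ lightThirds P H γ q.1 q.2, tripleCount P q.1 q.2 h'' := by
    simp only [lightTripleCount, ← sum_card_lightThirds_filter]
    refine sum_comm' fun p q => ?_
    simp only [setsThrough, mem_offDiag, mem_filter]
    tauto
  have hlight : ∀ q ∈ H.offDiag,
      (∑ h'' ∈ lightThirds P H γ q.1 q.2, tripleCount P q.1 q.2 h'' : ℝ) ≤ #H * γ := by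
    intro q _
    calc (∑ h'' ∈ lightThirds P H γ q.1 q.2, tripleCount P q.1 q.2 h'' : ℝ)
        ≤ #(lightThirds P H γ q.1 q.2) • γ :=
          sum_le_card_nsmul _ _ _ fun h'' hh'' => (mem_filter.mp hh'').2.le
      _ ≤ #H * γ := by
          rw [nsmul_eq_mul]
          gcongr
          exact filter_subset _ _
  calc (∑ p ∈ P, lightTripleCount P H γ p : ℝ)
      = ∑ q ∈ H.offDiag, (∑ h'' ∈ lightThirds P H γ q.1 q.2, tripleCount P q.1 q.2 h'' : ℝ) := by
        exact_mod_cast hswap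
    _ ≤ #H.offDiag • (#H * γ) := sum_le_card_nsmul _ _ _ hlight
    _ ≤ #H * #H * (#H * γ) := by
        rw [nsmul_eq_mul]
        gcongr
        exact_mod_cast (offDiag_card H).trans_le (Nat.sub_le _ _)
    _ = γ * #H ^ 3 := by ring

lemma pow_three_le_four_mul {x γ : ℝ} (hγ : 1 ≤ γ) (hx : 2 * γ ≤ x) :
    x ^ 3 ≤ 4 * (x * (x - 1) * (x - γ)) := by
  nlinarith [mul_le_mul_of_nonneg_left (by linarith : x / 2 ≤ x - 1) (by linarith : 0 ≤ x)]

lemma card_setsThrough_pow_three_le {γ : ℝ} {p : α} (hγ : 1 ≤ γ)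
    (hp : 2 * γ ≤ #(setsThrough H p))
    (hint : ∀ h ∈ H, ∀ h' ∈ H, h ≠ h' →
      ((H.filter (fun h'' => γ ≤ (tripleCount P h h' h'' : ℝ))).card : ℝ) ≤ γ) :
    (#(setsThrough H p) : ℝ) ^ 3 ≤ 4 * lightTripleCount P H γ p :=
  (pow_three_le_four_mul hγ hp).trans (by gcongr; exact le_lightTripleCount p hint)

end TripleIntersections

lemma le_mul_mul_rpow_of_pow_three_le {x c N m : ℝ} (hx : 0 ≤ x) (hc : 1 ≤ c) (hN : 0 ≤ N)
    (hm : 0 ≤ m) (h : x ^ 3 ≤ m ^ 2 * (c * N ^ 3)) : x ≤ c * N * m ^ ((2 : ℝ) / 3) := by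
  have hm23 : (m ^ ((2 : ℝ) / 3)) ^ 3 = m ^ 2 := by
    rw [← Real.rpow_mul_natCast hm]
    norm_num
  refine (pow_le_pow_iff_left₀ hx (by positivity) three_ne_zero).mp ?_
  calc x ^ 3 ≤ m ^ 2 * (c * N ^ 3) := h
    _ ≤ m ^ 2 * (c ^ 3 * N ^ 3) := by gcongr; exact le_self_pow₀ hc three_ne_zero
    _ = (c * N * m ^ ((2 : ℝ) / 3)) ^ 3 := by rw [mul_pow, mul_pow, hm23]; ring

/-- Lemma 2.2: if for each pair of distinct sets `h ≠ h'` in `H` there are at most `γ`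
sets `h''` in `H` with `|h ∩ h' ∩ h'' ∩ P| ≥ γ`, then
`I(P,H) ≤ 4γ(|P| + |H|·|P|^{2/3})`. -/
theorem stmt_1 (n : ℕ) (γ : ℝ) (hγ : 4 < γ)
    (P : Finset (Fin n → ℝ)) (H : Finset (Set (Fin n → ℝ)))
    (hint : ∀ h ∈ H, ∀ h' ∈ H, h ≠ h' →
      ((H.filter (fun h'' => γ ≤
        ((P.filter (fun p => p ∈ h ∧ p ∈ h' ∧ p ∈ h'')).card : ℝ))).card : ℝ) ≤ γ) :
    ((∑ h ∈ H, (P.filter (fun p => p ∈ h)).card : ℕ) : ℝ) ≤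
      4 * γ * (P.card + H.card * (P.card : ℝ) ^ ((2 : ℝ) / 3)) := by
  set d : (Fin n → ℝ) → ℝ := fun p => #(setsThrough H p)
  set rich := P.filter (fun p => 2 * γ ≤ d p)
  have hrich : (∑ p ∈ rich, d p) ^ 3 ≤ (#P : ℝ) ^ 2 * (4 * γ * #H ^ 3) := calc
    (∑ p ∈ rich, d p) ^ 3 ≤ (#rich : ℝ) ^ 2 * ∑ p ∈ rich, d p ^ 3 :=
      pow_sum_le_card_mul_sum_pow (fun _ _ => by positivity) 2
    _ ≤ (#P : ℝ) ^ 2 * ∑ p ∈ P, 4 * (lightTripleCount P H γ p : ℝ) := by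
      gcongr
      · exact filter_subset _ P
      · refine (sum_le_sum fun p hp => ?_).trans
          (sum_le_sum_of_subset_of_nonneg (filter_subset _ P) fun _ _ _ => by positivity)
        exact card_setsThrough_pow_three_le (by linarith) (mem_filter.mp hp).2 hint
    _ ≤ (#P : ℝ) ^ 2 * (4 * γ * #H ^ 3) := by
      rw [← mul_sum, mul_assoc 4 γ]
      gcongr
      exact sum_lightTripleCount_le (by linarith)
  have hpoor : ∑ p ∈ P.filter (fun p => ¬ 2 * γ ≤ d p), d p ≤ 4 * γ * #P := calc
    _ ≤ #(P.filter (fun p => ¬ 2 * γ ≤ d p)) • (2 * γ) :=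
      sum_le_card_nsmul _ _ _ fun p hp => (not_le.mp (mem_filter.mp hp).2).le
    _ ≤ 4 * γ * #P := by
      rw [nsmul_eq_mul]
      nlinarith [(Nat.cast_le (α := ℝ)).mpr (card_filter_le P fun p => ¬ 2 * γ ≤ d p)]
  rw [sum_card_filter_mem_eq_sum_card_setsThrough, Nat.cast_sum, ← sum_filter_add_sum_filter_not P
    (fun p => 2 * γ ≤ d p)]
  linarith [le_mul_mul_rpow_of_pow_three_le (sum_nonneg fun p _ => by positivity)
    (by linarith : 1 ≤ 4 * γ) (Nat.cast_nonneg #H) (Nat.cast_nonneg #P) hrich]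
end

section
/- Let E be a finite bipartite graph with vertex sets P and H and edge count E. If every pair of distinct vertices in H has at most γ common neighbors in P (with γ > 4), then either E ≤ 2|P| or E² ≤ 2γ|P||H|². -/
/-!
Write `d p` for the number of neighbours of `p ∈ P`. Counting triples `(p, h, h')` with `p`
adjacent to both `h` and `h'` gives `∑ d p ^ 2 = ∑_{h, h'} #(common neighbours of h, h')`;
the diagonal terms add up to `E` and the off-diagonal ones are at most `γ` each, so
`∑ d p ^ 2 ≤ E + γ |H| (|H| - 1)`. Cauchy–Schwarz gives `E ^ 2 ≤ |P| ∑ d p ^ 2`, and when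
`E > 2|P|` the term `|P| E` is less than `E ^ 2 / 2` and can be absorbed on the left.
-/

open scoped Classical

open Finset

section CommonNeighbors

variable {α β : Type*} (P : Finset α) (H : Finset β) (Adj : α → β → Prop)

theorem card_filter_adj_product_eq_sum :
    #((P ×ˢ H).filter fun q => Adj q.1 q.2) = ∑ p ∈ P, #(H.filter (Adj p)) := by
  simp only [card_filter, sum_product]

theorem sum_card_filter_adj_and_self :
    ∑ h ∈ H, #(P.filter fun p => Adj p h ∧ Adj p h) =
      #((P ×ˢ H).filter fun q => Adj q.1 q.2) := by
  simp only [and_self, card_filter, sum_product_right]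

theorem sum_sq_card_filter_adj :
    ∑ p ∈ P, #(H.filter (Adj p)) ^ 2 =
      ∑ h ∈ H, ∑ h' ∈ H, #(P.filter fun p => Adj p h ∧ Adj p h') := by
  simp only [card_filter, sq, sum_mul_sum, ite_zero_mul_ite_zero, mul_one]
  rw [sum_comm]
  exact sum_congr rfl fun _ _ => sum_comm

theorem sum_sq_card_filter_adj_le (γ : ℝ)
    (hcommon : ∀ h ∈ H, ∀ h' ∈ H, h ≠ h' →
      ((P.filter (fun p => Adj p h ∧ Adj p h')).card : ℝ) ≤ γ) :
    ((∑ p ∈ P, #(H.filter (Adj p)) ^ 2 : ℕ) : ℝ) ≤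
      #((P ×ˢ H).filter fun q => Adj q.1 q.2) + γ * (#H * (#H - 1) : ℕ) := by
  have row_le : ∀ h ∈ H, ((∑ h' ∈ H, #(P.filter fun p => Adj p h ∧ Adj p h') : ℕ) : ℝ) ≤
      #(P.filter fun p => Adj p h ∧ Adj p h) + γ * (#H - 1 : ℕ) := by
    intro h hh
    rw [← add_sum_erase _ _ hh, Nat.cast_add, Nat.cast_sum, ← card_erase_of_mem hh]
    gcongr
    calc ∑ h' ∈ H.erase h, (#(P.filter fun p => Adj p h ∧ Adj p h') : ℝ)
        ≤ ∑ _h' ∈ H.erase h, γ := sum_le_sum fun h' hh' =>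
          hcommon h hh h' (mem_of_mem_erase hh') (ne_of_mem_erase hh').symm
      _ = γ * #(H.erase h) := by rw [sum_const, nsmul_eq_mul, mul_comm]
  calc ((∑ p ∈ P, #(H.filter (Adj p)) ^ 2 : ℕ) : ℝ)
      = ∑ h ∈ H, ((∑ h' ∈ H, #(P.filter fun p => Adj p h ∧ Adj p h') : ℕ) : ℝ) := by
        rw [sum_sq_card_filter_adj, Nat.cast_sum]
    _ ≤ ∑ h ∈ H, ((#(P.filter fun p => Adj p h ∧ Adj p h) : ℝ) + γ * (#H - 1 : ℕ)) :=
        sum_le_sum row_le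
    _ = _ := by
        rw [sum_add_distrib, ← Nat.cast_sum, sum_card_filter_adj_and_self, sum_const,
          nsmul_eq_mul, Nat.cast_mul]
        ring

end CommonNeighbors

theorem le_two_mul_or_sq_le_of_sq_le_mul_add {K : Type*} [CommRing K] [LinearOrder K]
    [IsStrictOrderedRing K] {e n γ m M : K} (hn : 0 ≤ n) (hm : 0 ≤ m) (hmM : m ≤ M)
    (h : e ^ 2 ≤ n * (e + γ * m)) :
    e ≤ 2 * n ∨ e ^ 2 ≤ 2 * γ * n * M := by
  by_contra! ⟨hlt, hgt⟩
  have hγ : 0 < γ := by nlinarith [mul_nonneg hn hm]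
  nlinarith [mul_le_mul_of_nonneg_left hmM (mul_nonneg hγ.le hn)]

theorem stmt_2_general {α β : Type*} (P : Finset α) (H : Finset β) (Adj : α → β → Prop)
    (γ : ℝ)
    (hcommon : ∀ h ∈ H, ∀ h' ∈ H, h ≠ h' →
      ((P.filter (fun p => Adj p h ∧ Adj p h')).card : ℝ) ≤ γ) :
    (((P ×ˢ H).filter (fun q => Adj q.1 q.2)).card : ℝ) ≤ 2 * P.card ∨
      (((P ×ˢ H).filter (fun q => Adj q.1 q.2)).card : ℝ) ^ 2 ≤
        2 * γ * P.card * (H.card : ℝ) ^ 2 := by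
  have cauchy_schwarz : #((P ×ˢ H).filter fun q => Adj q.1 q.2) ^ 2 ≤
      #P * ∑ p ∈ P, #(H.filter (Adj p)) ^ 2 := by
    rw [card_filter_adj_product_eq_sum]
    exact sq_sum_le_card_mul_sum_sq
  refine le_two_mul_or_sq_le_of_sq_le_mul_add (Nat.cast_nonneg _)
    (m := ((#H * (#H - 1) : ℕ) : ℝ)) (Nat.cast_nonneg _) ?_ ?_
  · exact_mod_cast (Nat.mul_le_mul_left _ (Nat.sub_le _ 1)).trans_eq (sq _).symm
  · calc _ ≤ (#P : ℝ) * ((∑ p ∈ P, #(H.filter (Adj p)) ^ 2 : ℕ) : ℝ) := by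
          exact_mod_cast cauchy_schwarz
      _ ≤ _ := by
          gcongr
          exact sum_sq_card_filter_adj_le P H Adj γ hcommon

/-- Double-counting core: in a finite bipartite graph with parts `P` and `H` in which
any two distinct vertices of `H` have at most `γ` common neighbors in `P` (γ > 4),
the edge count `E` satisfies `E ≤ 2|P|` or `E² ≤ 2γ|P||H|²`. -/
theorem stmt_2 {α β : Type*} (P : Finset α) (H : Finset β) (Adj : α → β → Prop)
    (γ : ℝ) (hγ : 4 < γ)
    (hcommon : ∀ h ∈ H, ∀ h' ∈ H, h ≠ h' →
      ((P.filter (fun p => Adj p h ∧ Adj p h')).card : ℝ) ≤ γ) :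
    (((P ×ˢ H).filter (fun q => Adj q.1 q.2)).card : ℝ) ≤ 2 * P.card ∨
      (((P ×ˢ H).filter (fun q => Adj q.1 q.2)).card : ℝ) ^ 2 ≤
        2 * γ * P.card * (H.card : ℝ) ^ 2 :=
  stmt_2_general P H Adj γ hcommon
end
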